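/- Let ζ ∈ ℝ and consider, on the open set {(u,v,y,z) ∈ ℝ⁴ : y² + z² > 0}, the pp-wave metric g_H with H(u,y,z) = (ζ/2)·ln(y² + z²) (that is, H = ζ·ln|r| with r = √(y²+z²)). Then the vector field Z = u∂_u + (v − ζu)∂_v + y∂_y + z∂_z satisfies ℒ_Z g_H = 2·g_H, i.e. Z is a (proper) homothetic Killing vector of g_H with constant conformal factor ψ = 1. -/

import Mathlib

/-- Partial derivative ∂_c f at p on ℝ⁴ (coordinates (u,v,y,z) = indices 0,1,2,3). -/
noncomputable def pd (f : (Fin 4 → ℝ) → ℝ) (c : Fin 4) (p : Fin 4 → ℝ) : ℝ :=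
  fderiv ℝ f p (Pi.single c 1)

/-- Lie derivative of a bilinear-form-valued map g along the vector field Y:
(ℒ_Y g)_{ij} = Σ_c Y^c ∂_c g_{ij} + Σ_c g_{cj} ∂_i Y^c + Σ_c g_{ic} ∂_j Y^c. -/
noncomputable def lieDeriv (Y : (Fin 4 → ℝ) → (Fin 4 → ℝ))
    (g : (Fin 4 → ℝ) → Fin 4 → Fin 4 → ℝ) (p : Fin 4 → ℝ) (i j : Fin 4) : ℝ :=
  (∑ c, Y p c * pd (fun q => g q i j) c p)
  + (∑ c, g p c j * pd (fun q => Y q c) i p)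
  + (∑ c, g p i c * pd (fun q => Y q c) j p)

/-- The pp-wave metric with metric function H(u,y,z):
ds² = −2 du dv − 2H du² + dy² + dz². -/
noncomputable def ppMetric (H : (Fin 3 → ℝ) → ℝ) (p : Fin 4 → ℝ) : Fin 4 → Fin 4 → ℝ :=
  fun i j =>
    if i = 0 ∧ j = 0 then -2 * H ![p 0, p 2, p 3]
    else if (i = 0 ∧ j = 1) ∨ (i = 1 ∧ j = 0) then -1
    else if (i = 2 ∧ j = 2) ∨ (i = 3 ∧ j = 3) then 1
    else 0

lemma pd_const (a : ℝ) (c : Fin 4) (p : Fin 4 → ℝ) : pd (fun _ => a) c p = 0 := by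
  simp [pd, fderiv_const]

lemma pd_coord (k c : Fin 4) (p : Fin 4 → ℝ) :
    pd (fun q => q k) c p = Pi.single (M := fun _ : Fin 4 => ℝ) c 1 k := by
  have : (fun q : Fin 4 → ℝ => q k) = ⇑(ContinuousLinearMap.proj (R := ℝ) (φ := fun _ : Fin 4 => ℝ) k) := rfl
  rw [pd, this, ContinuousLinearMap.fderiv]
  rfl

lemma pd_Z1 (ζ : ℝ) (c : Fin 4) (p : Fin 4 → ℝ) :
    pd (fun q : Fin 4 → ℝ => q 1 - ζ * q 0) c p
      = Pi.single (M := fun _ : Fin 4 => ℝ) c 1 1 - ζ * Pi.single (M := fun _ : Fin 4 => ℝ) c 1 0 := by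
  have h0 : HasFDerivAt (fun q : Fin 4 → ℝ => q 0)
      (ContinuousLinearMap.proj (R := ℝ) (φ := fun _ : Fin 4 => ℝ) 0) p :=
    (ContinuousLinearMap.proj (R := ℝ) (φ := fun _ : Fin 4 => ℝ) 0).hasFDerivAt
  have h1 : HasFDerivAt (fun q : Fin 4 → ℝ => q 1)
      (ContinuousLinearMap.proj (R := ℝ) (φ := fun _ : Fin 4 => ℝ) 1) p :=
    (ContinuousLinearMap.proj (R := ℝ) (φ := fun _ : Fin 4 => ℝ) 1).hasFDerivAt
  have h : HasFDerivAt (fun q : Fin 4 → ℝ => q 1 - ζ * q 0)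
      (ContinuousLinearMap.proj (R := ℝ) (φ := fun _ : Fin 4 => ℝ) 1
        - ζ • ContinuousLinearMap.proj (R := ℝ) (φ := fun _ : Fin 4 => ℝ) 0) p :=
    h1.sub (h0.const_mul ζ)
  rw [pd, h.fderiv]
  simp [ContinuousLinearMap.sub_apply, ContinuousLinearMap.smul_apply]

lemma pd_log (a : ℝ) (p : Fin 4 → ℝ) (hp : 0 < p 2 ^ 2 + p 3 ^ 2) (c : Fin 4) :
    pd (fun q : Fin 4 → ℝ => a * Real.log ((q 2) ^ 2 + (q 3) ^ 2)) c p
      = a * ((p 2 ^ 2 + p 3 ^ 2)⁻¹ *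
          (2 * p 2 * Pi.single (M := fun _ : Fin 4 => ℝ) c 1 2 + 2 * p 3 * Pi.single (M := fun _ : Fin 4 => ℝ) c 1 3)) := by
  have h2 : HasFDerivAt (fun q : Fin 4 → ℝ => q 2)
      (ContinuousLinearMap.proj (R := ℝ) (φ := fun _ : Fin 4 => ℝ) 2) p :=
    (ContinuousLinearMap.proj (R := ℝ) (φ := fun _ : Fin 4 => ℝ) 2).hasFDerivAt
  have h3 : HasFDerivAt (fun q : Fin 4 → ℝ => q 3)
      (ContinuousLinearMap.proj (R := ℝ) (φ := fun _ : Fin 4 => ℝ) 3) p :=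
    (ContinuousLinearMap.proj (R := ℝ) (φ := fun _ : Fin 4 => ℝ) 3).hasFDerivAt
  have hφ := ((h2.mul h2).add (h3.mul h3))
  have hp' : p 2 * p 2 + p 3 * p 3 ≠ 0 := by nlinarith
  have hlog := (hφ.log hp').const_mul a
  have hfun : (fun q : Fin 4 → ℝ => a * Real.log ((q 2) ^ 2 + (q 3) ^ 2))
      = fun q : Fin 4 → ℝ => a * Real.log (q 2 * q 2 + q 3 * q 3) := by
    funext q; rw [pow_two, pow_two]
  rw [pd, hfun, HasFDerivAt.fderiv (f := fun q : Fin 4 → ℝ => a * Real.log (q 2 * q 2 + q 3 * q 3)) hlog]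
  simp [ContinuousLinearMap.smul_apply, ContinuousLinearMap.add_apply]
  rw [pow_two, pow_two]
  ring

lemma pd_g00 (ζ : ℝ) (H : (Fin 3 → ℝ) → ℝ)
    (hH : H = fun q => (ζ / 2) * Real.log ((q 1) ^ 2 + (q 2) ^ 2))
    (p : Fin 4 → ℝ) (hp : 0 < p 2 ^ 2 + p 3 ^ 2) (c : Fin 4) :
    pd (fun q : Fin 4 → ℝ => -2 * H ![q 0, q 2, q 3]) c p
      = -ζ * ((p 2 ^ 2 + p 3 ^ 2)⁻¹ *
          (2 * p 2 * Pi.single (M := fun _ : Fin 4 => ℝ) c 1 2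
           + 2 * p 3 * Pi.single (M := fun _ : Fin 4 => ℝ) c 1 3)) := by
  have hfun : (fun q : Fin 4 → ℝ => -2 * H ![q 0, q 2, q 3])
      = fun q : Fin 4 → ℝ => (-ζ) * Real.log ((q 2) ^ 2 + (q 3) ^ 2) := by
    subst hH; funext q; simp; ring
  rw [pd, hfun, ← pd, pd_log (-ζ) p hp c]

set_option maxHeartbeats 1000000 in
/-- for H = ζ·ln|r| = (ζ/2)·ln(y²+z²), the vector field
Z = u∂_u + (v − ζu)∂_v + y∂_y + z∂_z is a proper homothetic Killing vector of g_H
(with constant factor ψ = 1) on the region y² + z² > 0. -/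
theorem homothety_log_ppwave
    (ζ : ℝ)
    (H : (Fin 3 → ℝ) → ℝ)
    (hH : H = fun q => (ζ / 2) * Real.log ((q 1) ^ 2 + (q 2) ^ 2))
    (Z : (Fin 4 → ℝ) → (Fin 4 → ℝ))
    (hZ : Z = fun p => ![p 0, p 1 - ζ * p 0, p 2, p 3]) :
    ∀ p : Fin 4 → ℝ, 0 < (p 2) ^ 2 + (p 3) ^ 2 →
      ∀ i j, lieDeriv Z (ppMetric H) p i j = 2 * ppMetric H p i j := by
  intro p hp i j
  have hS : p 2 ^ 2 + p 3 ^ 2 ≠ 0 := ne_of_gt hp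
  have hg00 := pd_g00 ζ H hH p hp
  have hHval : H ![p 0, p 2, p 3] = ζ / 2 * Real.log (p 2 ^ 2 + p 3 ^ 2) := by
    rw [hH]; simp
  subst hZ
  fin_cases i <;> fin_cases j <;>
    simp (config := { decide := true }) only [lieDeriv, ppMetric, Fin.sum_univ_four,
      Fin.isValue, Matrix.cons_val_zero, Matrix.cons_val_one, Matrix.head_cons,
      Matrix.cons_val_two, Matrix.tail_cons, Matrix.cons_val_three,
      pd_const, pd_coord, pd_Z1, hg00, hHval, Pi.single_apply,
      if_true, if_false, and_self, and_true, true_and, reduceIte] <;>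
    field_simp <;>
    ring
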